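/- arXiv:2302.10122 — 3 statements merged into one kernel-verified Lean document; each statement's English description precedes it below -/
import Mathlib

section
/- For every 2π-periodic continuously differentiable function f on the circle whose Fourier coefficients vanish for all frequencies j with |j| ≤ k−1 (i.e. f is orthogonal in L² to all trigonometric polynomials of degree ≤ k−1), one has ‖f'‖_∞ ≥ (2k/π)·‖f‖_∞. -/
/-!
Bohr–Favard argument. Suppose `|f'| ≤ K` but `f x₀ > Kπ/(2k)`. Subtract the triangle wave `Δ` of
slope `±K` and period `2π/k` that peaks at `x₀` with height `Kπ/(2k)`. Since
`Δ (x + π/k) = -Δ x`, `Δ` has no Fourier modes of order `< k`, hence neither has `h = f - Δ`.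
On each of the `2k` laps of `Δ` in `[x₀, x₀ + 2π]` the function `±h` is monotone, and `h > 0` on
the first and the last lap, so `h` changes sign at `2k - 2` points `tᵢ` at most. The product of the
`sin ((x - tᵢ)/2)` is a trigonometric polynomial of degree `k - 1` with the same sign pattern as
`h`, so `∫ h T > 0`, against the orthogonality of `h` to such polynomials.
-/

open Real MeasureTheory intervalIntegral

open Function Set

open scoped NNReal Finset

theorem Real.neg_one_pow_mul_arcsin_cos {ν : ℕ} {θ : ℝ} (hθ : θ ∈ Icc (ν * π) ((ν + 1) * π)) :
    (-1) ^ ν * arcsin (cos θ) = ν * π + π / 2 - θ := by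
  induction ν generalizing θ with
  | zero =>
    simp only [CharP.cast_eq_zero, zero_mul, zero_add, one_mul, mem_Icc] at hθ
    rw [pow_zero, one_mul, ← sin_pi_div_two_sub, arcsin_sin (by linarith) (by linarith)]
    simp
  | succ ν ih =>
    have hθ' : θ - π ∈ Icc (ν * π) ((ν + 1) * π) := by
      push_cast at hθ
      constructor <;> linarith [hθ.1, hθ.2]
    rw [← sub_add_cancel θ π, cos_add_pi, arcsin_neg, pow_succ]
    push_cast
    linear_combination ih hθ'

noncomputable def triangleWave (ω x : ℝ) : ℝ := arcsin (cos (ω * x)) / ω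

@[fun_prop]
theorem continuous_triangleWave (ω : ℝ) : Continuous (triangleWave ω) := by
  unfold triangleWave
  fun_prop

theorem antiperiodic_triangleWave {ω : ℝ} (hω : ω ≠ 0) : Antiperiodic (triangleWave ω) (π / ω) := by
  intro x
  rw [triangleWave, triangleWave, mul_add, mul_div_cancel₀ _ hω, cos_add_pi, arcsin_neg, neg_div]

theorem triangleWave_zero (ω : ℝ) : triangleWave ω 0 = π / (2 * ω) := by
  rw [triangleWave, mul_zero, cos_zero, arcsin_one, div_div]

theorem neg_one_pow_mul_triangleWave {ω x : ℝ} (hω : 0 < ω) {ν : ℕ}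
    (hx : x ∈ Icc (ν * (π / ω)) ((ν + 1) * (π / ω))) :
    (-1) ^ ν * triangleWave ω x = (ν * π + π / 2) / ω - x := by
  have hθ : ω * x ∈ Icc (ν * π) ((ν + 1) * π) := by
    rw [← mul_div_assoc, ← mul_div_assoc, mem_Icc, div_le_iff₀ hω, le_div_iff₀ hω] at hx
    constructor <;> linarith [hx.1, hx.2]
  rw [triangleWave, ← mul_div_assoc, Real.neg_one_pow_mul_arcsin_cos hθ]
  field_simp

theorem LipschitzWith.monotoneOn_mul_sub {f g : ℝ → ℝ} {K : ℝ≥0} (hf : LipschitzWith K f)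
    {σ C : ℝ} (hσ : |σ| = 1) {s : Set ℝ} (hg : ∀ x ∈ s, σ * g x = C - K * x) :
    MonotoneOn (fun x => σ * (f x - g x)) s := by
  intro x hx y hy hxy
  have hlip : |f y - f x| ≤ K * (y - x) := by
    simpa [Real.dist_eq, abs_of_nonneg (sub_nonneg.2 hxy)] using hf.dist_le_mul y x
  have hσf : -|f y - f x| ≤ σ * (f y - f x) := by
    simpa [abs_mul, hσ] using neg_abs_le (σ * (f y - f x))
  simp only [mul_sub, hg x hx, hg y hy]
  linarith

theorem LipschitzWith.monotoneOn_neg_one_pow_mul_sub_triangleWave {f : ℝ → ℝ} {K : ℝ≥0}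
    (hf : LipschitzWith K f) {ω : ℝ} (hω : 0 < ω) (x₀ : ℝ) (ν : ℕ) :
    MonotoneOn (fun x => (-1) ^ ν * (f x - K * triangleWave ω (x - x₀)))
      (Icc (x₀ + ν * (π / ω)) (x₀ + (ν + 1 : ℕ) * (π / ω))) := by
  refine hf.monotoneOn_mul_sub (C := K * ((ν * π + π / 2) / ω + x₀)) (by simp) fun x hx => ?_
  have hx' : x - x₀ ∈ Icc (ν * (π / ω)) ((ν + 1) * (π / ω)) := by
    push_cast at hx
    constructor <;> linarith [hx.1, hx.2]
  linear_combination (K : ℝ) * neg_one_pow_mul_triangleWave hω hx'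

theorem exists_sign_change_of_monotoneOn {g : ℝ → ℝ} {a b : ℝ} (hab : a ≤ b)
    (hg : MonotoneOn g (Icc a b)) :
    ∃ t ∈ Icc a b, (∀ x ∈ Ico a t, g x ≤ 0) ∧ (∀ x ∈ Ioc t b, 0 ≤ g x) := by
  set S : Set ℝ := insert a {x ∈ Icc a b | g x ≤ 0}
  have hS : ∀ y ∈ S, y ∈ Icc a b := by
    rintro y (rfl | hy)
    · exact ⟨le_rfl, hab⟩
    · exact hy.1
  have hbdd : BddAbove S := ⟨b, fun y hy => (hS y hy).2⟩
  have ha : a ≤ sSup S := le_csSup hbdd (mem_insert a _)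
  refine ⟨sSup S, ⟨ha, csSup_le ⟨a, mem_insert a _⟩ fun y hy => (hS y hy).2⟩, ?_, ?_⟩
  · rintro x ⟨hax, hxt⟩
    obtain ⟨y, hyS, hxy⟩ := exists_lt_of_lt_csSup ⟨a, mem_insert a _⟩ hxt
    rcases hyS with rfl | ⟨hy, hgy⟩
    · exact absurd hxy hax.not_gt
    · exact (hg ⟨hax, hxy.le.trans hy.2⟩ hy hxy.le).trans hgy
  · rintro x ⟨htx, hxb⟩
    by_contra! hgx
    exact htx.not_ge (le_csSup hbdd (mem_insert_of_mem a ⟨⟨ha.trans htx.le, hxb⟩, hgx.le⟩))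

theorem periodic_exp_neg_I_mul_int (j : ℤ) :
    Periodic (fun x : ℝ => Complex.exp (-Complex.I * j * x)) (2 * π) := by
  intro x
  have hj : -Complex.I * j * ↑(2 * π) = ((-j : ℤ) : ℂ) * (2 * π * Complex.I) := by
    push_cast
    ring
  simp only [Complex.ofReal_add, mul_add, Complex.exp_add, hj, Complex.exp_int_mul_two_pi_mul_I,
    mul_one]

theorem exp_neg_I_mul_int_mul_pi_div_ne_neg_one {n : ℕ} {j : ℤ} (hj : |j| ≤ n) :
    Complex.exp (-Complex.I * j * ↑(π / (n + 1))) ≠ -1 := by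
  intro h
  obtain ⟨m, hm⟩ : ∃ m : ℤ, -Complex.I * j * ↑(π / (n + 1)) - π * Complex.I
      = m * (2 * π * Complex.I) := by
    rw [← Complex.exp_eq_one_iff, Complex.exp_sub, h, Complex.exp_pi_mul_I, div_self (by norm_num)]
  have hre : -(j * (π / (n + 1))) - π = m * (2 * π) := by
    have hI : ((-(j * (π / (n + 1))) - π : ℝ) : ℂ) * Complex.I
        = ((m * (2 * π) : ℝ) : ℂ) * Complex.I := by
      push_cast at hm ⊢
      linear_combination hm
    exact_mod_cast mul_right_cancel₀ Complex.I_ne_zero hI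
  have hj' : (j : ℝ) = -(2 * m + 1) * (n + 1) := by
    field_simp at hre
    nlinarith [pi_pos]
  have hj'' : j = -(2 * m + 1) * (n + 1) := by exact_mod_cast hj'
  rw [abs_le] at hj
  rcases le_or_gt 0 m with hm0 | hm0 <;> nlinarith

theorem Function.Antiperiodic.periodic_two_pi {β : Type*} [InvolutiveNeg β] {g : ℝ → β} {n : ℕ}
    (hg : Antiperiodic g (π / (n + 1))) : Periodic g (2 * π) := by
  have h2π : ((n + 1 : ℕ) : ℝ) * (2 • (π / (n + 1))) = 2 * π := by
    rw [nsmul_eq_mul]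
    push_cast
    field_simp
  exact h2π ▸ hg.periodic.nat_mul (n + 1)

theorem Function.Antiperiodic.integral_mul_exp_eq_zero {g : ℝ → ℂ} {n : ℕ}
    (hg : Antiperiodic g (π / (n + 1))) {j : ℤ} (hj : |j| ≤ n) (a : ℝ) :
    ∫ x in a..a + 2 * π, g x * Complex.exp (-Complex.I * j * x) = 0 := by
  set c := π / (n + 1)
  set G : ℝ → ℂ := fun x => g x * Complex.exp (-Complex.I * j * x)
  set q := -Complex.exp (-Complex.I * j * c)
  have hshift : ∀ x, G (x + c) = q * G x := by
    intro x
    simp only [G, q, hg x, Complex.ofReal_add, mul_add, Complex.exp_add]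
    ring
  have hper : Periodic G (2 * π) := hg.periodic_two_pi.mul (periodic_exp_neg_I_mul_int j)
  have hq : q ≠ 1 := fun h => exp_neg_I_mul_int_mul_pi_div_ne_neg_one hj (by
    rw [← neg_eq_iff_eq_neg]; exact h)
  have hfix : ∫ x in a..a + 2 * π, G x = q * ∫ x in a..a + 2 * π, G x := by
    calc ∫ x in a..a + 2 * π, G x = ∫ x in a + c..a + c + 2 * π, G x :=
          hper.intervalIntegral_add_eq a (a + c)
      _ = ∫ x in a..a + 2 * π, G (x + c) := by
          rw [intervalIntegral.integral_comp_add_right, add_right_comm]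
      _ = q * ∫ x in a..a + 2 * π, G x := by
          simp only [hshift, intervalIntegral.integral_const_mul]
  have := sub_eq_zero.2 hfix
  rw [← one_sub_mul, mul_eq_zero] at this
  exact this.resolve_left (sub_ne_zero.2 hq.symm)

theorem integral_mul_sin_half_mul_exp_eq_zero {H : ℝ → ℂ} (hH : Continuous H) {a b : ℝ} (s : ℝ)
    {ω : ℂ} (hminus : ∫ x in a..b, H x * Complex.exp (-Complex.I * (ω - 1 / 2) * x) = 0)
    (hplus : ∫ x in a..b, H x * Complex.exp (-Complex.I * (ω + 1 / 2) * x) = 0) :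
    ∫ x in a..b, H x * Real.sin ((x - s) / 2) * Complex.exp (-Complex.I * ω * x) = 0 := by
  have hint : ∀ ω' : ℂ, IntervalIntegrable
      (fun x : ℝ => H x * Complex.exp (-Complex.I * ω' * x)) volume a b := fun ω' =>
    (hH.mul (by fun_prop)).intervalIntegrable a b
  have hsplit : ∀ x : ℝ, H x * Real.sin ((x - s) / 2) * Complex.exp (-Complex.I * ω * x)
      = Complex.I / 2 * Complex.exp (Complex.I * s / 2)
          * (H x * Complex.exp (-Complex.I * (ω + 1 / 2) * x))
        - Complex.I / 2 * Complex.exp (-Complex.I * s / 2)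
          * (H x * Complex.exp (-Complex.I * (ω - 1 / 2) * x)) := by
    intro x
    have eplus : Complex.exp (-↑((x - s) / 2) * Complex.I) * Complex.exp (-Complex.I * ω * x)
        = Complex.exp (Complex.I * s / 2) * Complex.exp (-Complex.I * (ω + 1 / 2) * x) := by
      rw [← Complex.exp_add, ← Complex.exp_add]
      push_cast
      ring_nf
    have eminus : Complex.exp (↑((x - s) / 2) * Complex.I) * Complex.exp (-Complex.I * ω * x)
        = Complex.exp (-Complex.I * s / 2) * Complex.exp (-Complex.I * (ω - 1 / 2) * x) := by
      rw [← Complex.exp_add, ← Complex.exp_add]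
      push_cast
      ring_nf
    rw [Complex.ofReal_sin, Complex.sin]
    linear_combination (H x * Complex.I / 2) * eplus - (H x * Complex.I / 2) * eminus
  simp only [hsplit]
  rw [intervalIntegral.integral_sub ((hint _).const_mul _) ((hint _).const_mul _),
    intervalIntegral.integral_const_mul, intervalIntegral.integral_const_mul, hminus, hplus]
  simp

theorem integral_mul_prod_sin_half_mul_exp_eq_zero {ι : Type*} [DecidableEq ι] {H : ℝ → ℂ}
    (hH : Continuous H) {a b : ℝ} {n : ℕ}
    (horth : ∀ j : ℤ, |j| ≤ n → ∫ x in a..b, H x * Complex.exp (-Complex.I * j * x) = 0)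
    (t : ι → ℝ) (S : Finset ι) {j : ℤ} (hj₁ : #S ≤ j + n) (hj₂ : j ≤ n) :
    ∫ x in a..b, H x * (∏ i ∈ S, (Real.sin ((x - t i) / 2) : ℂ))
      * Complex.exp (-Complex.I * (j - #S / 2) * x) = 0 := by
  induction S using Finset.induction_on generalizing j with
  | empty =>
    simp only [Finset.card_empty, CharP.cast_eq_zero] at hj₁
    simpa using horth j (abs_le.2 ⟨by omega, hj₂⟩)
  | insert i S hi ih =>
    rw [Finset.card_insert_of_notMem hi] at hj₁ ⊢
    have hHS : Continuous fun x : ℝ => H x * ∏ k ∈ S, (Real.sin ((x - t k) / 2) : ℂ) := by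
      fun_prop
    have eminus : (j : ℂ) - ((#S + 1 : ℕ) : ℂ) / 2 - 1 / 2 = ((j - 1 : ℤ) : ℂ) - #S / 2 := by
      push_cast
      ring
    have eplus : (j : ℂ) - ((#S + 1 : ℕ) : ℂ) / 2 + 1 / 2 = (j : ℂ) - #S / 2 := by
      push_cast
      ring
    have := integral_mul_sin_half_mul_exp_eq_zero hHS (t i)
      (ω := j - ((#S + 1 : ℕ) : ℂ) / 2)
      (by rw [eminus]; exact ih (by push_cast at hj₁ ⊢; omega) (by omega))
      (by rw [eplus]; exact ih (by push_cast at hj₁ ⊢; omega) hj₂)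
    rw [← this]
    congr 1
    funext x
    rw [Finset.prod_insert hi]
    ring

theorem integral_mul_prod_sin_half_eq_zero {ι : Type*} [DecidableEq ι] {h : ℝ → ℝ}
    (hh : Continuous h) {a b : ℝ} {n : ℕ}
    (horth : ∀ j : ℤ, |j| ≤ n → ∫ x in a..b, (h x : ℂ) * Complex.exp (-Complex.I * j * x) = 0)
    (t : ι → ℝ) {S : Finset ι} (hS : #S = 2 * n) :
    ∫ x in a..b, h x * ∏ i ∈ S, sin ((x - t i) / 2) = 0 := by
  have := integral_mul_prod_sin_half_mul_exp_eq_zero (by fun_prop) horth t S (j := n)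
    (by rw [hS]; push_cast; omega) le_rfl
  have hfreq : ((n : ℤ) : ℂ) - ((#S : ℕ) : ℂ) / 2 = 0 := by
    rw [hS]
    push_cast
    ring
  rw [hfreq] at this
  rw [← Complex.ofReal_eq_zero, ← intervalIntegral.integral_ofReal]
  simpa using this

theorem neg_one_pow_card_filter_mul_prod_sin_half_nonneg {ι : Type*} (S : Finset ι) (t : ι → ℝ)
    (x : ℝ) (p : ι → Prop) [DecidablePred p]
    (hp : ∀ i ∈ S, p i → x ≤ t i ∧ t i ≤ x + 2 * π)
    (hnp : ∀ i ∈ S, ¬p i → x - 2 * π ≤ t i ∧ t i ≤ x) :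
    0 ≤ (-1) ^ #{i ∈ S | p i} * ∏ i ∈ S, sin ((x - t i) / 2) := by
  rw [← Finset.prod_filter_mul_prod_filter_not S p, ← mul_assoc, ← Finset.prod_neg]
  refine mul_nonneg (Finset.prod_nonneg fun i hi => ?_) (Finset.prod_nonneg fun i hi => ?_)
  · obtain ⟨hiS, hpi⟩ := Finset.mem_filter.1 hi
    have := hp i hiS hpi
    exact neg_nonneg.2 (sin_nonpos_of_nonpos_of_neg_pi_le (by linarith) (by linarith))
  · obtain ⟨hiS, hpi⟩ := Finset.mem_filter.1 hi
    have := hnp i hiS hpi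
    exact sin_nonneg_of_nonneg_of_le_pi (by linarith) (by linarith)

theorem prod_sin_half_pos_of_even_card {ι : Type*} {S : Finset ι} (hS : Even #S) {t : ι → ℝ}
    {x : ℝ} (ht : ∀ i ∈ S, x < t i ∧ t i < x + 2 * π) :
    0 < ∏ i ∈ S, sin ((x - t i) / 2) := by
  rw [← one_mul (∏ i ∈ S, _), ← hS.neg_one_pow, ← Finset.prod_neg]
  refine Finset.prod_pos fun i hi => ?_
  have := ht i hi
  exact neg_pos.2 (sin_neg_of_neg_of_neg_pi_lt (by linarith) (by linarith))

theorem mul_sin_half_sub_nonneg_of_sign_change {g : ℝ → ℝ} {α β t x : ℝ}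
    (hβ : β ≤ α + 2 * π) (hleft : ∀ y ∈ Ico α t, g y ≤ 0) (hright : ∀ y ∈ Ioc t β, 0 ≤ g y)
    (ht : t ∈ Icc α β) (hx : x ∈ Icc α β) :
    0 ≤ g x * sin ((x - t) / 2) := by
  rcases lt_trichotomy x t with hxt | rfl | hxt
  · exact mul_nonneg_of_nonpos_of_nonpos (hleft x ⟨hx.1, hxt⟩)
      (sin_nonpos_of_nonpos_of_neg_pi_le (by linarith) (by linarith [ht.2, hx.1]))
  · simp
  · exact mul_nonneg (hright x ⟨hxt, hx.2⟩)
      (sin_nonneg_of_nonneg_of_le_pi (by linarith) (by linarith [ht.1, hx.2]))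

section SignPattern

variable {n : ℕ} {a t : ℕ → ℝ}

-- For `ν = 2 * n + 1` the truncated `2 * n - ν = 0` is still the number of indices `i > ν`.
theorem neg_one_pow_mul_prod_sin_half_erase_nonneg (ha : Monotone a)
    (ha2π : a (2 * n + 2) ≤ a 0 + 2 * π) (ht : ∀ i, t i ∈ Icc (a i) (a (i + 1)))
    {ν : ℕ} (hν : ν ≤ 2 * n + 1) {x : ℝ} (hx : x ∈ Icc (a ν) (a (ν + 1))) :
    0 ≤ (-1) ^ (2 * n - ν) * ∏ i ∈ (Finset.Icc 1 (2 * n)).erase ν, sin ((x - t i) / 2) := by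
  have hcard : #{i ∈ (Finset.Icc 1 (2 * n)).erase ν | ν < i} = 2 * n - ν := by
    rw [← Nat.card_Ioc]
    congr 1
    ext i
    simp only [Finset.mem_filter, Finset.mem_erase, Finset.mem_Icc, Finset.mem_Ioc]
    omega
  have hx₀ : a 0 ≤ x := (ha (Nat.zero_le ν)).trans hx.1
  have hx₁ : x ≤ a (2 * n + 2) := hx.2.trans (ha (by omega))
  rw [← hcard]
  refine neg_one_pow_card_filter_mul_prod_sin_half_nonneg _ _ _ _ (fun i hi hνi => ?_)
    (fun i hi hνi => ?_)
  · have hi' := Finset.mem_Icc.1 (Finset.mem_of_mem_erase hi)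
    exact ⟨hx.2.trans ((ha hνi).trans (ht i).1),
      (ht i).2.trans ((ha (by omega : i + 1 ≤ 2 * n + 2)).trans (by linarith))⟩
  · have hiν : i + 1 ≤ ν := by have := Finset.ne_of_mem_erase hi; omega
    exact ⟨by linarith [ha (Nat.zero_le i), (ht i).1], (ht i).2.trans ((ha hiν).trans hx.1)⟩

theorem mul_prod_sin_half_nonneg {h : ℝ → ℝ} (ha : Monotone a)
    (ha2π : a (2 * n + 2) ≤ a 0 + 2 * π) (ht : ∀ i, t i ∈ Icc (a i) (a (i + 1)))
    (hleft : ∀ ν, ∀ x ∈ Ico (a ν) (t ν), (-1) ^ ν * h x ≤ 0)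
    (hright : ∀ ν, ∀ x ∈ Ioc (t ν) (a (ν + 1)), 0 ≤ (-1) ^ ν * h x)
    (hfirst : ∀ x ∈ Icc (a 0) (a 1), 0 < h x)
    (hlast : ∀ x ∈ Icc (a (2 * n + 1)) (a (2 * n + 2)), 0 < h x)
    {ν : ℕ} (hν : ν ≤ 2 * n + 1) {x : ℝ} (hx : x ∈ Icc (a ν) (a (ν + 1))) :
    0 ≤ h x * ∏ i ∈ Finset.Icc 1 (2 * n), sin ((x - t i) / 2) := by
  have hrest := neg_one_pow_mul_prod_sin_half_erase_nonneg ha ha2π ht hν hx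
  by_cases hνS : ν ∈ Finset.Icc 1 (2 * n)
  · have hfactor := mul_sin_half_sub_nonneg_of_sign_change
      ((ha (by omega : ν + 1 ≤ 2 * n + 2)).trans (ha2π.trans (by linarith [ha (Nat.zero_le ν)])))
      (hleft ν) (hright ν) (ht ν) hx
    have hsign : ((-1 : ℝ) ^ ν) * (-1) ^ (2 * n - ν) = 1 := by
      rw [← pow_add, Nat.add_sub_cancel' (by have := Finset.mem_Icc.1 hνS; omega), pow_mul]
      norm_num
    rw [← Finset.mul_prod_erase _ _ hνS]
    calc 0 ≤ ((-1) ^ ν * h x * sin ((x - t ν) / 2))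
          * ((-1) ^ (2 * n - ν) * ∏ i ∈ (Finset.Icc 1 (2 * n)).erase ν, sin ((x - t i) / 2)) :=
          mul_nonneg hfactor hrest
      _ = _ := by linear_combination (h x * sin ((x - t ν) / 2)
          * ∏ i ∈ (Finset.Icc 1 (2 * n)).erase ν, sin ((x - t i) / 2)) * hsign
  · have hν' : ν = 0 ∨ ν = 2 * n + 1 := by rw [Finset.mem_Icc] at hνS; omega
    have hpos : 0 < h x := by
      rcases hν' with rfl | rfl
      exacts [hfirst x hx, hlast x hx]
    have hsign : 2 * n - ν = 2 * n ∨ 2 * n - ν = 0 := by omega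
    rw [Finset.erase_eq_of_notMem hνS] at hrest
    rw [← one_mul (∏ i ∈ _, _), ← (show (-1 : ℝ) ^ (2 * n - ν) = 1 by
      rcases hsign with he | he <;> simp [he, pow_mul])]
    exact mul_nonneg hpos.le hrest

end SignPattern

theorem exists_integral_mul_prod_sin_half_pos {n : ℕ} {a : ℕ → ℝ} {h : ℝ → ℝ}
    (hh : Continuous h) (ha : Monotone a) (ha₀₁ : a 0 < a 1) (ha2π : a (2 * n + 2) ≤ a 0 + 2 * π)
    (hmono : ∀ ν, MonotoneOn (fun x => (-1) ^ ν * h x) (Icc (a ν) (a (ν + 1))))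
    (hstart : 0 < h (a 0)) (hend : 0 < h (a (2 * n + 2))) :
    ∃ t : ℕ → ℝ,
      0 < ∫ x in a 0..a (2 * n + 2), h x * ∏ i ∈ Finset.Icc 1 (2 * n), sin ((x - t i) / 2) := by
  choose t ht hleft hright using fun ν => exists_sign_change_of_monotoneOn (ha ν.le_succ) (hmono ν)
  have hfirst : ∀ x ∈ Icc (a 0) (a 1), 0 < h x := fun x hx => by
    have := hmono 0 (left_mem_Icc.2 (ha zero_le_one)) hx hx.1
    simp only [pow_zero, one_mul] at this
    linarith
  have hlast : ∀ x ∈ Icc (a (2 * n + 1)) (a (2 * n + 2)), 0 < h x := fun x hx => by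
    have := hmono (2 * n + 1) hx (right_mem_Icc.2 (ha (2 * n + 1).le_succ)) hx.2
    rw [(odd_two_mul_add_one n).neg_one_pow] at this
    linarith
  have hcont : Continuous fun x => h x * ∏ i ∈ Finset.Icc 1 (2 * n), sin ((x - t i) / 2) := by
    fun_prop
  refine ⟨t, ?_⟩
  rw [← sum_integral_adjacent_intervals fun ν _ => hcont.intervalIntegrable _ _,
    Finset.sum_range_succ']
  refine add_pos_of_nonneg_of_pos (Finset.sum_nonneg fun ν hν => ?_) ?_
  · exact integral_nonneg (ha ν.succ.le_succ) fun x hx =>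
      mul_prod_sin_half_nonneg ha ha2π ht hleft hright hfirst hlast
        (by rw [Finset.mem_range] at hν; omega) hx
  · refine intervalIntegral_pos_of_pos_on (hcont.intervalIntegrable _ _) (fun x hx => ?_) ha₀₁
    refine mul_pos (hfirst x (Ioo_subset_Icc_self hx)) (prod_sin_half_pos_of_even_card
      (by simp) fun i hi => ?_)
    have hi := Finset.mem_Icc.1 hi
    constructor
    · exact hx.2.trans_le ((ha hi.1).trans (ht i).1)
    · linarith [hx.1, (ht i).2.trans (ha (by omega : i + 1 ≤ 2 * n + 2))]

theorem integral_sub_triangleWave_mul_exp_eq_zero {n : ℕ} {f : ℝ → ℝ} (hf : Continuous f)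
    (hper : Periodic f (2 * π))
    (horth : ∀ j : ℤ, |j| ≤ n →
      ∫ x in (0 : ℝ)..2 * π, (f x : ℂ) * Complex.exp (-Complex.I * j * x) = 0)
    (K x₀ : ℝ) {j : ℤ} (hj : |j| ≤ n) :
    ∫ x in x₀..x₀ + 2 * π, ((f x - K * triangleWave (n + 1) (x - x₀) : ℝ) : ℂ)
      * Complex.exp (-Complex.I * j * x) = 0 := by
  have hfj : ∫ x in x₀..x₀ + 2 * π, (f x : ℂ) * Complex.exp (-Complex.I * j * x) = 0 :=
    (((hper.comp Complex.ofReal).mul (periodic_exp_neg_I_mul_int j)).intervalIntegral_add_eq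
      x₀ 0).trans (by rw [zero_add]; exact horth j hj)
  have hΔj : ∫ x in x₀..x₀ + 2 * π, ((K * triangleWave (n + 1) (x - x₀) : ℝ) : ℂ)
      * Complex.exp (-Complex.I * j * x) = 0 :=
    Antiperiodic.integral_mul_exp_eq_zero (fun x => by
      have hΔ := (antiperiodic_triangleWave n.cast_add_one_ne_zero).sub_const x₀ x
      dsimp only at hΔ
      rw [hΔ]
      push_cast
      ring) hj x₀
  simp only [Complex.ofReal_sub, sub_mul]
  rw [intervalIntegral.integral_sub (Continuous.intervalIntegrable (by fun_prop) _ _)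
    (Continuous.intervalIntegrable (by fun_prop) _ _), hfj, hΔj, sub_zero]

theorem apply_le_of_lipschitzWith_of_fourier_vanishing {n : ℕ} {f : ℝ → ℝ} {K : ℝ≥0}
    (hf : LipschitzWith K f) (hper : Periodic f (2 * π))
    (horth : ∀ j : ℤ, |j| ≤ n →
      ∫ x in (0 : ℝ)..2 * π, (f x : ℂ) * Complex.exp (-Complex.I * j * x) = 0)
    (x₀ : ℝ) : f x₀ ≤ K * π / (2 * (n + 1)) := by
  by_contra! hlt
  set ω : ℝ := n + 1
  have hω : 0 < ω := by positivity
  set Δ : ℝ → ℝ := fun x => K * triangleWave ω (x - x₀)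
  set a : ℕ → ℝ := fun ν => x₀ + ν * (π / ω)
  have hΔ : Antiperiodic Δ (π / ω) := fun x => by
    simp only [Δ, (antiperiodic_triangleWave hω.ne').sub_const x₀ x, mul_neg]
  have ha : Monotone a := fun p q hpq => by
    simp only [a]
    gcongr
  have ha2π : a (2 * n + 2) = x₀ + 2 * π := by
    simp only [a, ω]
    push_cast
    field_simp
  have hstart : 0 < f x₀ - Δ x₀ := by
    simp only [Δ, sub_self, triangleWave_zero]
    rw [mul_div_assoc] at hlt
    linarith
  have hΔc : Continuous Δ := by fun_prop
  obtain ⟨t, ht⟩ := exists_integral_mul_prod_sin_half_pos (h := fun x => f x - Δ x) (n := n)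
    (hf.continuous.sub hΔc) ha (by simp [a]; positivity) (by rw [ha2π]; simp [a])
    (fun ν => hf.monotoneOn_neg_one_pow_mul_sub_triangleWave hω x₀ ν) (by simpa [a] using hstart)
    (by rw [ha2π]; simpa [hper x₀, hΔ.periodic_two_pi x₀] using hstart)
  rw [show a 0 = x₀ by simp [a], ha2π, integral_mul_prod_sin_half_eq_zero
    (h := fun x => f x - Δ x) (hf.continuous.sub hΔc)
    (fun j hj => integral_sub_triangleWave_mul_exp_eq_zero hf.continuous hper horth K x₀ hj) t
    (by simp)] at ht
  exact lt_irrefl 0 ht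

theorem abs_apply_le_of_lipschitzWith_of_fourier_vanishing {n : ℕ} {f : ℝ → ℝ} {K : ℝ≥0}
    (hf : LipschitzWith K f) (hper : Periodic f (2 * π))
    (horth : ∀ j : ℤ, |j| ≤ n →
      ∫ x in (0 : ℝ)..2 * π, (f x : ℂ) * Complex.exp (-Complex.I * j * x) = 0)
    (x₀ : ℝ) : |f x₀| ≤ K * π / (2 * (n + 1)) := by
  have hneg := apply_le_of_lipschitzWith_of_fourier_vanishing (n := n) hf.neg
    (fun x => congrArg Neg.neg (hper x)) (fun j hj => by
      rw [← neg_eq_zero, ← intervalIntegral.integral_neg, ← horth j hj]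
      congr 1
      ext x
      simp only [Pi.neg_apply, Complex.ofReal_neg, neg_mul, neg_neg]) x₀
  exact abs_le.2 ⟨by simpa [neg_le] using hneg,
    apply_le_of_lipschitzWith_of_fourier_vanishing hf hper horth x₀⟩

theorem Function.Periodic.lipschitzWith_iSup_abs_deriv {f : ℝ → ℝ} {T : ℝ} (hT : T ≠ 0)
    (hper : Periodic f T) (hf : ContDiff ℝ 1 f) :
    LipschitzWith (⨆ x, |deriv f x|).toNNReal f := by
  have hper' : Periodic (fun x => |deriv f x|) T := fun x => by
    show |deriv f (x + T)| = |deriv f x|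
    rw [← deriv_comp_add_const, show (fun y => f (y + T)) = f from funext hper]
  have hbdd : BddAbove (range fun x => |deriv f x|) :=
    (hper'.isBounded_of_continuous hT (hf.continuous_deriv le_rfl).abs).bddAbove
  refine lipschitzWith_of_nnnorm_deriv_le (hf.differentiable one_ne_zero) fun x => ?_
  rw [← NNReal.coe_le_coe, coe_nnnorm, Real.coe_toNNReal _ (Real.iSup_nonneg fun _ => abs_nonneg _)]
  exact le_ciSup hbdd x

theorem reverse_bernstein_first_derivative_general
    (k : ℕ) (f : ℝ → ℝ)
    (hper : Function.Periodic f (2 * π))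
    (hreg : ContDiff ℝ 1 f)
    (horth : ∀ j : ℤ, |j| ≤ (k : ℤ) - 1 →
      (∫ x in (0:ℝ)..(2 * π), (f x : ℂ) * Complex.exp (-Complex.I * j * x)) = 0) :
    (2 * k / π) * (⨆ x : ℝ, |f x|) ≤ ⨆ x : ℝ, |deriv f x| := by
  obtain _ | n := k
  · simpa using Real.iSup_nonneg fun x => abs_nonneg (deriv f x)
  have hL : 0 ≤ ⨆ x, |deriv f x| := Real.iSup_nonneg fun x => abs_nonneg _
  have hbound : ∀ x, |f x| ≤ (⨆ x, |deriv f x|) * π / (2 * (n + 1)) := fun x => by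
    simpa [Real.coe_toNNReal _ hL] using abs_apply_le_of_lipschitzWith_of_fourier_vanishing
      (hper.lipschitzWith_iSup_abs_deriv two_pi_pos.ne' hreg) hper
      (fun j hj => horth j (by push_cast; omega)) x
  calc 2 * ↑(n + 1) / π * ⨆ x, |f x|
      ≤ 2 * (n + 1) / π * ((⨆ x, |deriv f x|) * π / (2 * (n + 1))) := by
        push_cast
        gcongr
        exact ciSup_le hbound
    _ = ⨆ x, |deriv f x| := by
        field_simp

/-- **Reverse Bernstein inequality, first derivative.**
For every 2π-periodic C¹ function `f` whose Fourier coefficients vanish for all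
frequencies `j` with `|j| ≤ k − 1`, one has `‖f'‖_∞ ≥ (2k/π)·‖f‖_∞`. -/
theorem reverse_bernstein_first_derivative
    (k : ℕ) (hk : 1 ≤ k) (f : ℝ → ℝ)
    (hper : Function.Periodic f (2 * π))
    (hreg : ContDiff ℝ 1 f)
    (horth : ∀ j : ℤ, |j| ≤ (k : ℤ) - 1 →
      (∫ x in (0:ℝ)..(2 * π), (f x : ℂ) * Complex.exp (-Complex.I * j * x)) = 0) :
    (2 * k / π) * (⨆ x : ℝ, |f x|) ≤ ⨆ x : ℝ, |deriv f x| :=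
  reverse_bernstein_first_derivative_general k f hper hreg horth
end

section
/- For every 2π-periodic C¹ function f with zero mean (∫₀^{2π} f = 0), ‖f'‖_∞ ≥ (2/π)·‖f‖_∞, and the constant 2/π is optimal: the 2π-periodic triangular wave c(x) = π/2 − d(x,0) (with d the angular distance) saturates the inequality. -/
open Real MeasureTheory intervalIntegral

/-- The triangular cosine `c(x) = π/2 − d(x,0)`, where `d` is the angular
distance on `ℝ/2πℤ`. -/
noncomputable def tri (x : ℝ) : ℝ := π / 2 - |x - 2 * π * round (x / (2 * π))|

/-!
If `|f'| ≤ M`, then `f` lies above the tent `f a - M |x - a|`. Integrating over the period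
`[a - π, a + π]`, on which `f` has zero mean, gives `0 ≥ 2π f(a) - π² M`, i.e. `f a ≤ (π/2) M`;
the same for `-f` bounds `|f a|`.

The triangular wave agrees with `π/2 - |x - 2πn|` near every point of `(2πn - π, 2πn + π)`, so
away from the countably many multiples of `π` it has slope `±1`; its maximum `π/2` is at `0`.
-/

open Set Topology

theorem Function.Periodic.deriv {f : ℝ → ℝ} {T : ℝ} (hp : Function.Periodic f T) :
    Function.Periodic (deriv f) T := fun x => by
  rw [← deriv_comp_add_const, funext hp]

lemma integral_abs_sub_center (a : ℝ) {r : ℝ} (hr : 0 ≤ r) :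
    ∫ x in (a - r)..(a + r), |x - a| = r ^ 2 := by
  rw [integral_comp_sub_right (fun x => |x|) a, sub_sub_cancel_left, add_sub_cancel_left]
  have hpos : ∫ x in (0 : ℝ)..r, |x| = r ^ 2 / 2 := by
    rw [integral_congr fun x hx => abs_of_nonneg (uIcc_of_le hr ▸ hx).1, integral_id]
    ring
  have hneg : ∫ x in (-r)..0, |x| = r ^ 2 / 2 := by
    rw [← hpos]
    simpa using (integral_comp_neg (a := 0) (b := r) fun x => |x|).symm
  rw [← integral_add_adjacent_intervals (continuous_abs.intervalIntegrable _ _)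
    (continuous_abs.intervalIntegrable _ _), hneg, hpos]
  ring

lemma two_mul_le_of_integral_eq_zero {f : ℝ → ℝ} (hf : Differentiable ℝ f) {M : ℝ}
    (hM : ∀ x, |deriv f x| ≤ M) {a r : ℝ} (hr : 0 ≤ r)
    (hint : ∫ x in (a - r)..(a + r), f x = 0) : 2 * r * f a ≤ r ^ 2 * M := by
  have htent : ∀ x, f a - M * |x - a| ≤ f x := fun x => by
    have := convex_univ.norm_image_sub_le_of_norm_deriv_le (fun y _ => hf y) (fun y _ => hM y)
      (mem_univ x) (mem_univ a)
    rw [Real.norm_eq_abs, Real.norm_eq_abs, abs_sub_comm a x] at this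
    linarith [(abs_le.mp this).2]
  have hdist_cont : Continuous fun x => M * |x - a| := by fun_prop
  have htent_int : ∫ x in (a - r)..(a + r), (f a - M * |x - a|) = 2 * r * f a - r ^ 2 * M := by
    rw [integral_sub intervalIntegrable_const (hdist_cont.intervalIntegrable _ _),
      intervalIntegral.integral_const, intervalIntegral.integral_const_mul,
      integral_abs_sub_center a hr, smul_eq_mul]
    ring
  have : 2 * r * f a - r ^ 2 * M ≤ 0 :=
    calc 2 * r * f a - r ^ 2 * M
        = ∫ x in (a - r)..(a + r), (f a - M * |x - a|) := htent_int.symm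
      _ ≤ ∫ x in (a - r)..(a + r), f x :=
        integral_mono_on (by linarith) ((continuous_const.sub hdist_cont).intervalIntegrable _ _)
          (hf.continuous.intervalIntegrable _ _) fun x _ => htent x
      _ = 0 := hint
  linarith

lemma two_mul_abs_le_of_integral_eq_zero {f : ℝ → ℝ} (hf : Differentiable ℝ f) {M : ℝ}
    (hM : ∀ x, |deriv f x| ≤ M) {a r : ℝ} (hr : 0 ≤ r)
    (hint : ∫ x in (a - r)..(a + r), f x = 0) : 2 * r * |f a| ≤ r ^ 2 * M := by
  have hle := two_mul_le_of_integral_eq_zero hf hM hr hint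
  have hge := two_mul_le_of_integral_eq_zero (f := fun x => -f x) hf.neg
    (by simpa only [deriv.fun_neg, abs_neg] using hM) (a := a) hr
    (by rw [intervalIntegral.integral_neg, hint, neg_zero])
  rcases abs_cases (f a) with ⟨h, _⟩ | ⟨h, _⟩ <;> rw [h] <;> linarith

theorem iSup_abs_le_of_periodic_of_integral_eq_zero {f : ℝ → ℝ} {T : ℝ}
    (hp : Function.Periodic f T) (hT : 0 < T) (hf : ContDiff ℝ 1 f)
    (hmean : ∫ x in (0 : ℝ)..T, f x = 0) :
    ⨆ x, |f x| ≤ T / 4 * ⨆ x, |deriv f x| := by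
  have hbdd : BddAbove (range fun x => |deriv f x|) :=
    ((hp.deriv.comp abs).compact_of_continuous hT.ne' (hf.continuous_deriv le_rfl).abs).bddAbove
  refine ciSup_le fun a => ?_
  have hint : ∫ x in (a - T / 2)..(a + T / 2), f x = 0 := by
    rw [show a + T / 2 = a - T / 2 + T by ring, hp.intervalIntegral_add_eq _ 0, zero_add, hmean]
  have hbound := two_mul_abs_le_of_integral_eq_zero (hf.differentiable one_ne_zero)
    (le_ciSup hbdd) (by positivity) hint
  exact le_of_mul_le_mul_left (by linarith : T * |f a| ≤ T * (T / 4 * ⨆ x, |deriv f x|)) hT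

lemma abs_sub_mul_round_div_le {p : ℝ} (hp : 0 < p) (x : ℝ) : |x - p * round (x / p)| ≤ p / 2 := by
  have h : x - p * round (x / p) = p * (x / p - round (x / p)) := by field_simp
  rw [h, abs_mul, abs_of_pos hp]
  linarith [mul_le_mul_of_nonneg_left (abs_sub_round (x / p)) hp.le]

lemma abs_tri_le (x : ℝ) : |tri x| ≤ π / 2 := by
  have := abs_sub_mul_round_div_le two_pi_pos x
  rw [tri, abs_le]
  constructor <;> linarith [abs_nonneg (x - 2 * π * round (x / (2 * π)))]

lemma iSup_abs_tri : ⨆ x, |tri x| = π / 2 :=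
  le_antisymm (ciSup_le abs_tri_le) <| le_ciSup_of_le ⟨π / 2, forall_mem_range.2 abs_tri_le⟩ 0
    ((le_abs_self _).trans_eq (by simp [tri]))

lemma tri_eventuallyEq {n : ℤ} {x : ℝ} (hx : x ∈ Ioo (2 * π * n - π) (2 * π * n + π)) :
    tri =ᶠ[𝓝 x] fun y => π / 2 - |y - 2 * π * n| := by
  filter_upwards [Ioo_mem_nhds hx.1 hx.2] with y hy
  rw [tri, round_eq_iff.2 ⟨?_, ?_⟩]
  · rw [le_div_iff₀ two_pi_pos]; linarith [hy.1]
  · rw [div_lt_iff₀ two_pi_pos]; linarith [hy.2]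

lemma abs_deriv_tri {n : ℤ} {x : ℝ} (hx : x ∈ Ioo (2 * π * n - π) (2 * π * n + π))
    (hxn : x ≠ 2 * π * n) : |deriv tri x| = 1 := by
  have hd := ((hasDerivAt_abs (sub_ne_zero.2 hxn)).comp x
    ((hasDerivAt_id x).sub_const _)).const_sub (π / 2)
  rw [(hd.congr_of_eventuallyEq (tri_eventuallyEq hx)).deriv]
  rcases (sub_ne_zero.2 hxn).lt_or_gt with h | h <;> simp [h]

lemma exists_mem_Ioo_of_notMem_range {x : ℝ} (hx : x ∉ range fun k : ℤ => k * π) :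
    ∃ n : ℤ, x ∈ Ioo (2 * π * n - π) (2 * π * n + π) ∧ x ≠ 2 * π * n := by
  obtain ⟨h1, h2⟩ := round_eq_iff.1 (rfl : round (x / (2 * π)) = _)
  rw [le_div_iff₀ two_pi_pos] at h1
  rw [div_lt_iff₀ two_pi_pos] at h2
  set n := round (x / (2 * π))
  refine ⟨n, ⟨(by linarith : 2 * π * n - π ≤ x).lt_of_ne fun h => hx ⟨2 * n - 1, ?_⟩, by linarith⟩,
    fun h => hx ⟨2 * n, ?_⟩⟩ <;> push_cast <;> linarith

lemma ae_abs_deriv_tri : ∀ᵐ x, |deriv tri x| = 1 := by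
  filter_upwards [(countable_range fun k : ℤ => (k : ℝ) * π).ae_notMem volume] with x hx
  obtain ⟨n, hxn, hne⟩ := exists_mem_Ioo_of_notMem_range hx
  exact abs_deriv_tri hxn hne

/-- **Reverse Bernstein inequality for zero-mean functions, with sharpness.**
Every 2π-periodic C¹ function with zero mean satisfies `‖f'‖_∞ ≥ (2/π)·‖f‖_∞`,
and the triangular wave `c(x) = π/2 − d(x,0)` saturates the inequality:
`‖c‖_∞ = π/2` while `|c'| = 1` almost everywhere. -/
theorem reverse_bernstein_k_one_sharp :
    (∀ f : ℝ → ℝ, Function.Periodic f (2 * π) → ContDiff ℝ 1 f →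
      (∫ x in (0:ℝ)..(2 * π), f x) = 0 →
      (2 / π) * (⨆ x : ℝ, |f x|) ≤ ⨆ x : ℝ, |deriv f x|) ∧
    (⨆ x : ℝ, |tri x|) = π / 2 ∧
    (∀ᵐ x : ℝ ∂volume, |deriv tri x| = 1) := by
  refine ⟨fun f hp hf hmean => ?_, iSup_abs_tri, ae_abs_deriv_tri⟩
  calc 2 / π * ⨆ x, |f x| ≤ 2 / π * (2 * π / 4 * ⨆ x, |deriv f x|) := by
        gcongr
        exact iSup_abs_le_of_periodic_of_integral_eq_zero hp two_pi_pos hf hmean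
    _ = ⨆ x, |deriv f x| := by field_simp; ring
end

section
/- Let k ≥ 1 and let p be an odd real trigonometric polynomial of degree ≤ k. Then the set Z of zeros on S¹ of J₁ − p, where J₁(x) = x on (−π,π) and J₁(π) := 0 (with the convention that π ∈ Z iff p(π) = 0), has cardinality at most 2k + 2. -/
/-!
On `(−π, π)` the zeros of `J₁ − p` are those of `f(x) = x − p(x)`, whose derivative `1 − p'` is a
cosine polynomial `∑_{j ≤ k} a_j cos(jx)`. It does not vanish identically, since `f(0) = 0` while
`f(π) = π`. With `z = e^{ix}` we have `cos(jx) = (z^j + z^{-j})/2`, so `z^k (1 − p'(x))` is a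
nonzero complex polynomial of degree `≤ 2k` in `z`; as `x ↦ e^{ix}` is injective on `(−π, π]`,
`1 − p'` has at most `2k` zeros there. By Rolle `f` then has at most `2k + 1` zeros in `(−π, π)`,
and the point `π` contributes at most one more.
-/

open Real MeasureTheory intervalIntegral

/-- An odd real trigonometric polynomial of degree at most `n`:
a real linear combination of `sin(jx)`, `1 ≤ j ≤ n`. -/
def IsOddTrigPoly (n : ℕ) (p : ℝ → ℝ) : Prop :=
  ∃ b : ℕ → ℝ, ∀ x : ℝ, p x = ∑ j ∈ Finset.range (n + 1), b j * Real.sin (j * x)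

open Polynomial Set

-- Continuity suffices: `deriv f x = 0` wherever `f` is not differentiable.
theorem encard_zeros_le_encard_deriv_zeros_add_one {f : ℝ → ℝ} {s : Set ℝ} (hs : s.OrdConnected)
    (hf : ContinuousOn f s) :
    {x ∈ s | f x = 0}.encard ≤ {x ∈ s | deriv f x = 0}.encard + 1 := by
  obtain hD | hD := {x ∈ s | deriv f x = 0}.infinite_or_finite
  · simp [hD.encard_eq]
  lift {x ∈ s | deriv f x = 0} to Finset ℝ using hD with t ht
  have card_le : ∀ T : Finset ℝ, ↑T ⊆ {x ∈ s | f x = 0} → T.card ≤ t.card + 1 :=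
    fun T hT => Finset.card_le_of_interleaved fun x hx y hy hxy _ => by
      have hIcc : Icc x y ⊆ s := hs.out (hT hx).1 (hT hy).1
      obtain ⟨z, hz, hz'⟩ :=
        exists_deriv_eq_zero hxy (hf.mono hIcc) ((hT hx).2.trans (hT hy).2.symm)
      refine ⟨z, ?_, hz⟩
      rw [← Finset.mem_coe, ht]
      exact ⟨hIcc (Ioo_subset_Icc_self hz), hz'⟩
  by_contra! hlt
  rw [encard_coe_eq_coe_finsetCard] at hlt
  obtain ⟨u, hu, hcard⟩ := exists_subset_encard_eq (Order.add_one_le_of_lt hlt)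
  have hu_fin : u.Finite := finite_of_encard_eq_coe hcard
  rw [hu_fin.encard_eq_coe_toFinset_card] at hcard
  have := card_le hu_fin.toFinset (by simpa using hu)
  norm_cast at hcard
  omega

noncomputable def cosSumPolynomial (k : ℕ) (a : ℕ → ℝ) : ℂ[X] :=
  ∑ j ∈ Finset.range (k + 1), C ((a j / 2 : ℝ) : ℂ) * (X ^ (k + j) + X ^ (k - j))

theorem natDegree_cosSumPolynomial_le (k : ℕ) (a : ℕ → ℝ) :
    (cosSumPolynomial k a).natDegree ≤ 2 * k := by
  refine natDegree_sum_le_of_forall_le _ _ fun j hj => ?_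
  have hjk : j ≤ k := Finset.mem_range_succ_iff.1 hj
  refine (natDegree_C_mul_le _ _).trans ((natDegree_add_le _ _).trans (max_le ?_ ?_)) <;>
    rw [natDegree_X_pow] <;> omega

theorem eval_exp_mul_I_cosSumPolynomial (k : ℕ) (a : ℕ → ℝ) (x : ℝ) :
    (cosSumPolynomial k a).eval (Complex.exp (x * Complex.I)) =
      Complex.exp (x * Complex.I) ^ k *
        ((∑ j ∈ Finset.range (k + 1), a j * cos (j * x) : ℝ) : ℂ) := by
  set z := Complex.exp (x * Complex.I)
  have hz : z ≠ 0 := Complex.exp_ne_zero _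
  have hcos : ∀ j : ℕ, (cos (j * x) : ℂ) = (z ^ j + (z ^ j)⁻¹) / 2 := fun j => by
    rw [← Complex.exp_nat_mul, ← Complex.exp_neg, Complex.ofReal_cos, Complex.cos]
    push_cast
    ring_nf
  simp only [cosSumPolynomial, eval_finsetSum, eval_mul, eval_C, eval_add, eval_pow, eval_X,
    Complex.ofReal_sum, Complex.ofReal_mul, Finset.mul_sum, hcos]
  refine Finset.sum_congr rfl fun j hj => ?_
  rw [pow_add, pow_sub₀ _ hz (Finset.mem_range_succ_iff.1 hj)]
  push_cast
  ring

theorem injOn_exp_mul_I : InjOn (fun x : ℝ => Complex.exp (x * Complex.I)) (Ioc (-π) π) :=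
  LeftInvOn.injOn (f₁' := Complex.arg) fun x hx => by
    rw [Complex.arg_exp_mul_I, toIocMod_eq_self]
    simpa [two_mul, ← add_assoc] using hx

theorem encard_setOf_isRoot_exp_mul_I_le {Q : ℂ[X]} (hQ : Q ≠ 0) :
    {x ∈ Ioc (-π) π | Q.IsRoot (Complex.exp (x * Complex.I))}.encard ≤ Q.natDegree := calc
  _ ≤ (Q.roots.toFinset : Set ℂ).encard :=
    encard_le_encard_of_injOn (fun x hx => by simpa [mem_roots hQ] using hx.2)
      (injOn_exp_mul_I.mono fun x hx => hx.1)
  _ ≤ Q.natDegree := by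
    rw [encard_coe_eq_coe_finsetCard]
    exact_mod_cast (Multiset.toFinset_card_le _).trans (card_roots' Q)

theorem encard_setOf_sum_cos_eq_zero_le {k : ℕ} {a : ℕ → ℝ}
    (ha : ∃ x, ∑ j ∈ Finset.range (k + 1), a j * cos (j * x) ≠ 0) :
    {x ∈ Ioc (-π) π | ∑ j ∈ Finset.range (k + 1), a j * cos (j * x) = 0}.encard ≤ 2 * k := by
  have hQ : cosSumPolynomial k a ≠ 0 := by
    obtain ⟨x, hx⟩ := ha
    intro h
    have := eval_exp_mul_I_cosSumPolynomial k a x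
    rw [h, eval_zero, eq_comm, mul_eq_zero, Complex.ofReal_eq_zero] at this
    exact hx (this.resolve_left (pow_ne_zero _ (Complex.exp_ne_zero _)))
  calc _ ≤ {x ∈ Ioc (-π) π |
          (cosSumPolynomial k a).IsRoot (Complex.exp (x * Complex.I))}.encard :=
        encard_mono fun x hx => ⟨hx.1, by rw [IsRoot, eval_exp_mul_I_cosSumPolynomial, hx.2]; simp⟩
    _ ≤ 2 * k := by
      grw [encard_setOf_isRoot_exp_mul_I_le hQ, natDegree_cosSumPolynomial_le]
      norm_cast

theorem hasDerivAt_sum_sin (b : ℕ → ℝ) (n : ℕ) (x : ℝ) :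
    HasDerivAt (fun y => ∑ j ∈ Finset.range (n + 1), b j * sin (j * y))
      (∑ j ∈ Finset.range (n + 1), j * b j * cos (j * x)) x :=
  HasDerivAt.fun_sum fun j _ =>
    ((((hasDerivAt_id' x).const_mul (j : ℝ)).sin).const_mul (b j)).congr_deriv (by ring)

namespace IsOddTrigPoly

variable {k : ℕ} {p : ℝ → ℝ}

theorem continuous (hp : IsOddTrigPoly k p) : Continuous p := by
  obtain ⟨b, hb⟩ := hp
  rw [funext hb]
  fun_prop

theorem encard_setOf_deriv_id_sub_eq_zero_le (hp : IsOddTrigPoly k p) :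
    {x ∈ Ioo (-π) π | deriv (fun y => y - p y) x = 0}.encard ≤ 2 * k := by
  obtain ⟨b, hb⟩ := hp
  set a : ℕ → ℝ := Pi.single 0 1 - fun j => j * b j
  have hderiv : ∀ x,
      HasDerivAt (fun y => y - p y) (∑ j ∈ Finset.range (k + 1), a j * cos (j * x)) x := by
    intro x
    rw [funext hb]
    refine ((hasDerivAt_id' x).sub (hasDerivAt_sum_sin b k x)).congr_deriv ?_
    simp only [a, Pi.sub_apply, sub_mul, Finset.sum_sub_distrib, Pi.single_apply, ite_mul]
    simp
  have hderiv_ne : ∃ x, ∑ j ∈ Finset.range (k + 1), a j * cos (j * x) ≠ 0 := by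
    by_contra! h
    have := is_const_of_deriv_eq_zero (fun x => (hderiv x).differentiableAt)
      (fun x => (hderiv x).deriv.trans (h x)) π 0
    simp [hb, sin_nat_mul_pi, pi_ne_zero] at this
  refine (encard_le_encard fun x hx => ?_).trans (encard_setOf_sum_cos_eq_zero_le hderiv_ne)
  exact ⟨Ioo_subset_Ioc_self hx.1, (hderiv x).deriv ▸ hx.2⟩

end IsOddTrigPoly

theorem sawtooth_zero_count_general (k : ℕ) (p : ℝ → ℝ)
    (hp : IsOddTrigPoly k p) :
    ({x ∈ Set.Ioc (-π) π | if x = π then p π = 0 else x = p x}).Finite ∧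
    ({x ∈ Set.Ioc (-π) π | if x = π then p π = 0 else x = p x}).ncard ≤ 2 * k + 2 := by
  set Z := {x ∈ Set.Ioc (-π) π | if x = π then p π = 0 else x = p x}
  have hZ : Z ⊆ insert π {x ∈ Ioo (-π) π | x - p x = 0} := by
    rintro x ⟨⟨hx₁, hx₂⟩, hx⟩
    by_cases hxπ : x = π
    · exact .inl hxπ
    · rw [if_neg hxπ] at hx
      exact .inr ⟨⟨hx₁, hx₂.lt_of_ne hxπ⟩, sub_eq_zero.2 hx⟩
  have hZ_encard : Z.encard ≤ (2 * k + 2 : ℕ) := calc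
    Z.encard ≤ {x ∈ Ioo (-π) π | x - p x = 0}.encard + 1 :=
      (encard_mono hZ).trans (encard_insert_le _ _)
    _ ≤ {x ∈ Ioo (-π) π | deriv (fun y => y - p y) x = 0}.encard + 1 + 1 := by
      gcongr
      exact encard_zeros_le_encard_deriv_zeros_add_one ordConnected_Ioo
        (continuous_id.sub hp.continuous).continuousOn
    _ ≤ (2 * k + 2 : ℕ) := by
      grw [hp.encard_setOf_deriv_id_sub_eq_zero_le]
      norm_cast
  exact encard_le_coe_iff_finite_ncard_le.1 hZ_encard

/-- **Zero-count bound for the sawtooth minus an odd polynomial.**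
For an odd trigonometric polynomial `p` of degree ≤ k, the zero set on the
circle `(−π, π]` of `J₁ − p` (where `J₁(x) = x` on `(−π,π)`, with the
convention that `π` is a zero iff `p(π) = 0`) has at most `2k + 2` elements. -/
theorem sawtooth_zero_count (k : ℕ) (hk : 1 ≤ k) (p : ℝ → ℝ)
    (hp : IsOddTrigPoly k p) :
    ({x ∈ Set.Ioc (-π) π | if x = π then p π = 0 else x = p x}).Finite ∧
    ({x ∈ Set.Ioc (-π) π | if x = π then p π = 0 else x = p x}).ncard ≤ 2 * k + 2 :=
  sawtooth_zero_count_general k p hp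
end
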